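/- arXiv:math/0310229 — 3 statements merged into one kernel-verified Lean document; each statement's English description precedes it below -/
import Mathlib

section
/- Let N ≥ 2 be an integer, let (c_j)_{j ≥ 0} be positive reals with c* := inf_j c_j > 0, and let (h_j)_{j ≥ 1} be positive reals with h_j ≥ c_{j-1} N^{−(j−1)/2} for all j ≥ 1. For x, y ∈ Ω_N and t ≥ 0 define p_t(x,y) := (δ_{0,|x−y|} − 1) e^{−h_{|x−y|} t} N^{−|x−y|} + (N−1) Σ_{j=|x−y|+1}^∞ e^{−h_j t} N^{−j}. Then there exist constants C, C' depending only on c* (and not on N) such that for all functions φ_1, φ_2 : Ω_N → [0,∞): (i) Σ_{x,y ∈ Ω_N} φ_1(x) φ_2(y) ∫_0^∞ p_t(x,y) dt ≤ C Σ_{x,y ∈ Ω_N} φ_1(x) φ_2(y) N^{−|x−y|/2}, and (ii) Σ_{x,y ∈ Ω_N} φ_1(x) φ_2(y) ∫_0^∞ t·p_t(x,y) dt ≤ C' Σ_{x,y ∈ Ω_N} φ_1(x) φ_2(y) Σ_{j=|x−y|}^∞ c_j^{−2}. -/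
/-!
The first term of `p_t` is nonpositive, and the tail `(N-1) ∑_{j>|x-y|} e^{-h_j t} N^{-j}` gives
`∫ tⁿ p_t dt ≤ n! ∑_{j>|x-y|} (N-1) N^{-j} h_j^{-(n+1)}` for `n = 0, 1`. Since
`(N-1) N^{-j} ≤ N^{-(j-1)}` and `h_j ≥ c_{j-1} N^{-(j-1)/2}`, the `j`-th term is at most
`N^{-(j-1)/2} / c*` for `n = 0`, a geometric series of ratio `N^{-1/2} ≤ 3/4` summing to at most
`4 N^{-|x-y|/2} / c*`, and at most `c_{j-1}^{-2}` for `n = 1`. These bounds hold pointwise in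
`(x, y)`, so they pass to the pairings against `φ₁ ⊗ φ₂`.
-/

open MeasureTheory ENNReal NNReal

/-- The hierarchical group `Ω_N`: sequences in `{0,…,N−1}` with all but finitely many entries
zero, under componentwise addition mod `N`. -/
abbrev HGroup (N : ℕ) : Type := ℕ →₀ ZMod N

/-- The hierarchical distance `|x − y|`: `0` if `x = y`, and `1 + max{n : xₙ ≠ yₙ}` otherwise. -/
noncomputable def hdist {N : ℕ} (x y : HGroup N) : ℕ :=
  (x - y).support.sup (fun n => n + 1)

/-- The transition probability of the `(2,(c_j),N)`-hierarchical random walk: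
`p_t(x,y) = (δ_{0,|x−y|} − 1) e^{−h_{|x−y|} t} N^{−|x−y|} + (N−1) ∑_{j>|x−y|} e^{−h_j t} N^{−j}`. -/
noncomputable def hrwP (N : ℕ) (h : ℕ → ℝ) (t : ℝ) (x y : HGroup N) : ℝ :=
  ((if hdist x y = 0 then (1 : ℝ) else 0) - 1) *
      Real.exp (-h (hdist x y) * t) / (N : ℝ) ^ (hdist x y) +
    ((N : ℝ) - 1) * ∑' j : ℕ,
      if hdist x y < j then Real.exp (-h j * t) / (N : ℝ) ^ j else 0

open Real Set
open scoped Nat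

theorem ENNReal.ofReal_tsum_le_tsum_ofReal {α : Type*} {f : α → ℝ} (hf : ∀ a, 0 ≤ f a) :
    ENNReal.ofReal (∑' a, f a) ≤ ∑' a, ENNReal.ofReal (f a) := by
  by_cases hs : Summable f
  · exact (ENNReal.ofReal_tsum_of_nonneg hf hs).le
  · simp [tsum_eq_zero_of_not_summable hs]

theorem tsum_ite_le_eq_tsum_add {M : Type*} [AddCommMonoid M] [TopologicalSpace M]
    (f : ℕ → M) (d : ℕ) :
    ∑' j, (if d ≤ j then f j else 0) = ∑' k, f (k + d) := by
  rw [← (add_left_injective d).tsum_eq]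
  · simp
  · intro j hj
    exact ⟨j - d, Nat.sub_add_cancel (not_not.1 fun h ↦ hj (if_neg h))⟩

theorem lintegral_pow_mul_exp_neg_mul_Ioi (n : ℕ) {b : ℝ} (hb : 0 < b) :
    ∫⁻ s in Ioi (0 : ℝ), ENNReal.ofReal (s ^ n * exp (-b * s)) =
      ENNReal.ofReal (n ! / b ^ (n + 1)) := by
  have key := integral_rpow_mul_exp_neg_mul_Ioi (a := (n : ℝ) + 1) (by positivity) hb
  have hint : IntegrableOn (fun s : ℝ ↦ s ^ ((n : ℝ) + 1 - 1) * exp (-(b * s))) (Ioi 0) :=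
    .of_integral_ne_zero (by rw [key]; positivity)
  simp only [add_sub_cancel_right, Real.rpow_natCast, ← neg_mul] at key hint
  rw [← ofReal_integral_eq_lintegral_ofReal hint
    ((ae_restrict_iff' measurableSet_Ioi).2 (.of_forall fun s hs ↦ by
      have : 0 < s := hs; positivity)), key, Gamma_nat_eq_factorial,
    ← Nat.cast_add_one, Real.rpow_natCast, one_div_pow, one_div_mul_eq_div]

theorem rpow_neg_div_two {x : ℝ} (hx : 0 ≤ x) (m : ℕ) :
    x ^ (-((m : ℝ) / 2)) = (√x)⁻¹ ^ m := by
  rw [Real.sqrt_eq_rpow, ← rpow_neg hx, ← Real.rpow_natCast, ← rpow_mul hx]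
  ring_nf

theorem inv_sqrt_le_three_quarters {a : ℝ} (ha : 2 ≤ a) : (√a)⁻¹ ≤ 3 / 4 := by
  rw [inv_le_comm₀ (Real.sqrt_pos.2 (by linarith)) (by norm_num),
    le_sqrt (by norm_num) (by linarith)]
  linarith

theorem tsum_ite_lt_ofReal_pow_div_le {q c : ℝ} (hq0 : 0 ≤ q) (hq : q ≤ 3 / 4) (hc : 0 < c)
    (d : ℕ) :
    ∑' j, (if d < j then ENNReal.ofReal (q ^ (j - 1) / c) else 0) ≤
      ENNReal.ofReal (4 / c) * ENNReal.ofReal (q ^ d) := by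
  have hgeom : Summable fun k : ℕ ↦ q ^ d / c * q ^ k :=
    (summable_geometric_of_lt_one hq0 (by linarith)).mul_left _
  calc ∑' j, (if d < j then ENNReal.ofReal (q ^ (j - 1) / c) else 0)
      = ENNReal.ofReal (∑' k : ℕ, q ^ d / c * q ^ k) := by
        rw [ENNReal.ofReal_tsum_of_nonneg (fun k ↦ by positivity) hgeom]
        simp only [Nat.lt_iff_add_one_le]
        rw [tsum_ite_le_eq_tsum_add]
        refine tsum_congr fun k ↦ ?_
        rw [show k + (d + 1) - 1 = d + k by omega, pow_add, mul_div_right_comm, mul_comm]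
    _ ≤ ENNReal.ofReal (4 / c * q ^ d) := by
        rw [_root_.tsum_mul_left, tsum_geometric_of_lt_one hq0 (by linarith)]
        refine ENNReal.ofReal_le_ofReal ?_
        rw [div_mul_eq_mul_div, div_mul_eq_mul_div, mul_comm (4 : ℝ)]
        gcongr
        rw [inv_le_comm₀ (by linarith) (by norm_num)]
        linarith
    _ = _ := ENNReal.ofReal_mul (by positivity)

theorem sub_one_div_pow_succ_le {a : ℝ} (ha : 1 ≤ a) (m : ℕ) :
    (a - 1) / a ^ (m + 1) ≤ ((√a)⁻¹ ^ m) ^ 2 := by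
  have ha0 : 0 < a := by linarith
  rw [← pow_mul, mul_comm, pow_mul, inv_pow, sq_sqrt ha0.le, inv_pow]
  calc (a - 1) / a ^ (m + 1) ≤ a / a ^ (m + 1) := by gcongr; linarith
    _ = (a ^ m)⁻¹ := by field_simp; ring

theorem sub_one_div_pow_succ_div_le {a c h : ℝ} (ha : 1 ≤ a) (hc : 0 < c) {m : ℕ}
    (hch : c * (√a)⁻¹ ^ m ≤ h) :
    (a - 1) / a ^ (m + 1) / h ≤ (√a)⁻¹ ^ m / c := by
  have hq : 0 < (√a)⁻¹ ^ m := by have : 0 < √a := Real.sqrt_pos.2 (by linarith); positivity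
  calc (a - 1) / a ^ (m + 1) / h ≤ ((√a)⁻¹ ^ m) ^ 2 / (c * (√a)⁻¹ ^ m) := by
        gcongr
        exact sub_one_div_pow_succ_le ha m
    _ = (√a)⁻¹ ^ m / c := by field_simp

theorem sub_one_div_pow_succ_div_sq_le {a c h : ℝ} (ha : 1 ≤ a) (hc : 0 < c) {m : ℕ}
    (hch : c * (√a)⁻¹ ^ m ≤ h) :
    (a - 1) / a ^ (m + 1) / h ^ 2 ≤ (c ^ 2)⁻¹ := by
  have hq : 0 < (√a)⁻¹ ^ m := by have : 0 < √a := Real.sqrt_pos.2 (by linarith); positivity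
  calc (a - 1) / a ^ (m + 1) / h ^ 2 ≤ ((√a)⁻¹ ^ m) ^ 2 / (c * (√a)⁻¹ ^ m) ^ 2 := by
        gcongr
        exact sub_one_div_pow_succ_le ha m
    _ = (c ^ 2)⁻¹ := by field_simp

section HierarchicalWalk

variable {N : ℕ} {h : ℕ → ℝ}

theorem hrwP_le_tail (s : ℝ) (x y : HGroup N) :
    hrwP N h s x y ≤
      ((N : ℝ) - 1) * ∑' j, if hdist x y < j then exp (-h j * s) / (N : ℝ) ^ j else 0 := by
  have hdiag : ((if hdist x y = 0 then (1 : ℝ) else 0) - 1) *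
      exp (-h (hdist x y) * s) / (N : ℝ) ^ hdist x y ≤ 0 :=
    div_nonpos_of_nonpos_of_nonneg
      (mul_nonpos_of_nonpos_of_nonneg (by split_ifs <;> norm_num) (exp_nonneg _)) (by positivity)
  unfold hrwP
  linarith

theorem ofReal_pow_mul_hrwP_le (n : ℕ) (hN : 1 ≤ N) {s : ℝ} (hs : 0 ≤ s) (x y : HGroup N) :
    ENNReal.ofReal (s ^ n * hrwP N h s x y) ≤
      ∑' j, if hdist x y < j then
        ENNReal.ofReal (((N : ℝ) - 1) / (N : ℝ) ^ j) * ENNReal.ofReal (s ^ n * exp (-h j * s))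
      else 0 := by
  have hw : ∀ j, 0 ≤ ((N : ℝ) - 1) / (N : ℝ) ^ j := fun j ↦
    div_nonneg (sub_nonneg.2 (by exact_mod_cast hN)) (by positivity)
  set g : ℕ → ℝ := fun j ↦
    if hdist x y < j then ((N : ℝ) - 1) / (N : ℝ) ^ j * (s ^ n * exp (-h j * s)) else 0
  have hg : ∀ j, 0 ≤ g j := fun j ↦ by
    simp only [g]; split_ifs
    · exact mul_nonneg (hw j) (by positivity)
    · exact le_rfl
  have hsum : s ^ n * (((N : ℝ) - 1) *
      ∑' j, if hdist x y < j then exp (-h j * s) / (N : ℝ) ^ j else 0) = ∑' j, g j := by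
    rw [← _root_.tsum_mul_left, ← _root_.tsum_mul_left]
    refine tsum_congr fun j ↦ ?_
    simp only [g]; split_ifs
    · ring
    · simp
  calc ENNReal.ofReal (s ^ n * hrwP N h s x y) ≤ ENNReal.ofReal (∑' j, g j) := by
        rw [← hsum]
        exact ENNReal.ofReal_le_ofReal
          (mul_le_mul_of_nonneg_left (hrwP_le_tail s x y) (by positivity))
    _ ≤ ∑' j, ENNReal.ofReal (g j) := ENNReal.ofReal_tsum_le_tsum_ofReal hg
    _ = _ := by
        refine tsum_congr fun j ↦ ?_
        simp only [g]; split_ifs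
        · exact ENNReal.ofReal_mul (hw j)
        · simp

theorem lintegral_pow_mul_hrwP_le (n : ℕ) (hN : 1 ≤ N) (hh : ∀ j, 0 < h j) (x y : HGroup N) :
    ∫⁻ s in Ioi (0 : ℝ), ENNReal.ofReal (s ^ n * hrwP N h s x y) ≤
      ∑' j, if hdist x y < j then
        ENNReal.ofReal (((N : ℝ) - 1) / (N : ℝ) ^ j * (n ! / h j ^ (n + 1)))
      else 0 := by
  calc ∫⁻ s in Ioi (0 : ℝ), ENNReal.ofReal (s ^ n * hrwP N h s x y)
      ≤ ∫⁻ s in Ioi (0 : ℝ), ∑' j, if hdist x y < j then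
          ENNReal.ofReal (((N : ℝ) - 1) / (N : ℝ) ^ j) * ENNReal.ofReal (s ^ n * exp (-h j * s))
        else 0 :=
        setLIntegral_mono' measurableSet_Ioi fun s hs ↦ ofReal_pow_mul_hrwP_le n hN hs.le x y
    _ = ∑' j, ∫⁻ s in Ioi (0 : ℝ), if hdist x y < j then
          ENNReal.ofReal (((N : ℝ) - 1) / (N : ℝ) ^ j) * ENNReal.ofReal (s ^ n * exp (-h j * s))
        else 0 := lintegral_tsum fun j ↦ by split_ifs <;> fun_prop
    _ = _ := by
        refine tsum_congr fun j ↦ ?_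
        split_ifs
        · rw [lintegral_const_mul _ (by fun_prop), lintegral_pow_mul_exp_neg_mul_Ioi n (hh j),
            ← ENNReal.ofReal_mul
              (div_nonneg (sub_nonneg.2 (by exact_mod_cast hN)) (by positivity))]
        · simp

theorem lintegral_hrwP_le {cstar : ℝ} {c : ℕ → ℝ} (hN : 2 ≤ N) (hcstar : 0 < cstar)
    (hcs : ∀ j, cstar ≤ c j) (hh : ∀ j, 0 < h j)
    (hch : ∀ m, c m * (√N)⁻¹ ^ m ≤ h (m + 1)) (x y : HGroup N) :
    ∫⁻ s in Ioi (0 : ℝ), ENNReal.ofReal (hrwP N h s x y) ≤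
      ENNReal.ofReal (4 / cstar) * ENNReal.ofReal ((N : ℝ) ^ (-((hdist x y : ℝ) / 2))) := by
  have hN1 : (1 : ℝ) ≤ N := by exact_mod_cast (by omega : 1 ≤ N)
  have hterm : ∀ j, (if hdist x y < j then
      ENNReal.ofReal (((N : ℝ) - 1) / (N : ℝ) ^ j * (0 ! / h j ^ (0 + 1))) else 0) ≤
      if hdist x y < j then ENNReal.ofReal ((√N)⁻¹ ^ (j - 1) / cstar) else 0 := fun j ↦ by
    split_ifs with hj
    · obtain ⟨m, rfl⟩ : ∃ m, j = m + 1 := ⟨j - 1, by omega⟩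
      refine ENNReal.ofReal_le_ofReal ?_
      simp only [Nat.factorial_zero, Nat.cast_one, zero_add, pow_one, mul_one_div,
        Nat.add_sub_cancel]
      calc ((N : ℝ) - 1) / (N : ℝ) ^ (m + 1) / h (m + 1) ≤ (√N)⁻¹ ^ m / c m :=
            sub_one_div_pow_succ_div_le hN1 (hcstar.trans_le (hcs m)) (hch m)
        _ ≤ (√N)⁻¹ ^ m / cstar := by gcongr; exact hcs m
    · exact le_rfl
  calc ∫⁻ s in Ioi (0 : ℝ), ENNReal.ofReal (hrwP N h s x y)
      ≤ ∑' j, if hdist x y < j then ENNReal.ofReal ((√N)⁻¹ ^ (j - 1) / cstar) else 0 := by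
        simpa using (lintegral_pow_mul_hrwP_le 0 (by omega) hh x y).trans
          (ENNReal.tsum_le_tsum hterm)
    _ ≤ ENNReal.ofReal (4 / cstar) * ENNReal.ofReal ((√N)⁻¹ ^ hdist x y) :=
        tsum_ite_lt_ofReal_pow_div_le (by positivity)
          (inv_sqrt_le_three_quarters (by exact_mod_cast hN)) hcstar _
    _ = _ := by rw [rpow_neg_div_two (by positivity)]

theorem lintegral_mul_hrwP_le {c : ℕ → ℝ} (hN : 1 ≤ N) (hc : ∀ j, 0 < c j)
    (hh : ∀ j, 0 < h j) (hch : ∀ m, c m * (√N)⁻¹ ^ m ≤ h (m + 1)) (x y : HGroup N) :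
    ∫⁻ s in Ioi (0 : ℝ), ENNReal.ofReal (s * hrwP N h s x y) ≤
      ∑' j, if hdist x y ≤ j then ENNReal.ofReal ((c j ^ 2)⁻¹) else 0 := by
  have hN1 : (1 : ℝ) ≤ N := by exact_mod_cast hN
  have hterm : ∀ j, (if hdist x y < j then
      ENNReal.ofReal (((N : ℝ) - 1) / (N : ℝ) ^ j * (1 ! / h j ^ (1 + 1))) else 0) ≤
      if hdist x y < j then ENNReal.ofReal ((c (j - 1) ^ 2)⁻¹) else 0 := fun j ↦ by
    split_ifs with hj
    · obtain ⟨m, rfl⟩ : ∃ m, j = m + 1 := ⟨j - 1, by omega⟩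
      refine ENNReal.ofReal_le_ofReal ?_
      simp only [Nat.factorial_one, Nat.cast_one, mul_one_div, Nat.add_sub_cancel]
      exact sub_one_div_pow_succ_div_sq_le hN1 (hc m) (hch m)
    · exact le_rfl
  calc ∫⁻ s in Ioi (0 : ℝ), ENNReal.ofReal (s * hrwP N h s x y)
      ≤ ∑' j, if hdist x y < j then ENNReal.ofReal ((c (j - 1) ^ 2)⁻¹) else 0 := by
        simpa using (lintegral_pow_mul_hrwP_le 1 hN hh x y).trans (ENNReal.tsum_le_tsum hterm)
    _ = ∑' j, if hdist x y ≤ j then ENNReal.ofReal ((c j ^ 2)⁻¹) else 0 := by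
        simp only [Nat.lt_iff_add_one_le]
        rw [tsum_ite_le_eq_tsum_add, tsum_ite_le_eq_tsum_add]
        simp only [← add_assoc, Nat.add_sub_cancel]

end HierarchicalWalk

theorem tsum_tsum_mul_le_mul_of_le_mul {α β : Type*} (φ₁ : α → ℝ≥0∞) (φ₂ : β → ℝ≥0∞)
    {K B : α → β → ℝ≥0∞} {C : ℝ≥0∞} (hKB : ∀ x y, K x y ≤ C * B x y) :
    ∑' x, ∑' y, φ₁ x * φ₂ y * K x y ≤ C * ∑' x, ∑' y, φ₁ x * φ₂ y * B x y := by
  simp_rw [← ENNReal.tsum_mul_left]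
  refine ENNReal.tsum_le_tsum fun x ↦ ENNReal.tsum_le_tsum fun y ↦ ?_
  calc φ₁ x * φ₂ y * K x y ≤ φ₁ x * φ₂ y * (C * B x y) := by gcongr; exact hKB x y
    _ = C * (φ₁ x * φ₂ y * B x y) := by ring

/-- Green operator bounds for the `(2,(c_j),N)`-hierarchical random walk: there are constants
`C, C'` depending only on `c* = inf_j c_j > 0` (and not on `N`) such that, for all nonnegative
`φ₁, φ₂`,
`⟨φ₁, G_N φ₂⟩ ≤ C ∑_{x,y} φ₁(x)φ₂(y) N^{−|x−y|/2}` and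
`⟨φ₁, G_N² φ₂⟩ ≤ C' ∑_{x,y} φ₁(x)φ₂(y) ∑_{j ≥ |x−y|} c_j^{−2}`. -/
theorem hierarchical_green_bounds (cstar : ℝ) (hcstar : 0 < cstar) :
    ∃ C C' : ℝ≥0,
      ∀ (N : ℕ), 2 ≤ N → ∀ c h : ℕ → ℝ,
        (∀ j, 0 < c j) → (∀ j, cstar ≤ c j) →
        (∀ j, 0 < h j) →
        (∀ j : ℕ, 1 ≤ j → c (j - 1) * (N : ℝ) ^ (-(((j : ℝ) - 1) / 2)) ≤ h j) →
        ∀ φ₁ φ₂ : HGroup N → ℝ≥0∞,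
          (∑' x, ∑' y, φ₁ x * φ₂ y *
              ∫⁻ s in Set.Ioi (0 : ℝ), ENNReal.ofReal (hrwP N h s x y) ≤
            (C : ℝ≥0∞) * ∑' x, ∑' y, φ₁ x * φ₂ y *
              ENNReal.ofReal ((N : ℝ) ^ (-((hdist x y : ℝ) / 2)))) ∧
          (∑' x, ∑' y, φ₁ x * φ₂ y *
              ∫⁻ s in Set.Ioi (0 : ℝ), ENNReal.ofReal (s * hrwP N h s x y) ≤
            (C' : ℝ≥0∞) * ∑' x, ∑' y, φ₁ x * φ₂ y *
              ∑' j : ℕ, if hdist x y ≤ j then ENNReal.ofReal ((c j ^ 2)⁻¹) else 0) := by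
  refine ⟨(4 / cstar).toNNReal, 1, fun N hN c h hc hcs hh hch φ₁ φ₂ ↦ ?_⟩
  have hgrowth : ∀ m, c m * (√N)⁻¹ ^ m ≤ h (m + 1) := fun m ↦ by
    have := hch (m + 1) (by omega)
    rwa [Nat.add_sub_cancel, Nat.cast_add_one, add_sub_cancel_right,
      rpow_neg_div_two (Nat.cast_nonneg N)] at this
  constructor
  · exact tsum_tsum_mul_le_mul_of_le_mul φ₁ φ₂ fun x y ↦
      lintegral_hrwP_le hN hcstar hcs hh hgrowth x y
  · simpa using tsum_tsum_mul_le_mul_of_le_mul φ₁ φ₂ (C := 1) fun x y ↦ by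
      simpa using lintegral_mul_hrwP_le (by omega) hc hh hgrowth x y
end

section
/- Let B_ℓ^{(N)} := {x ∈ Ω_N : |x| ≤ ℓ} be the ball of hierarchical radius ℓ (which has N^ℓ elements). Then: (i) sup_{N ≥ 2} N^{−2ℓ} Σ_{x,y ∈ B_ℓ^{(N)}} N^{−|x−y|/2} → 0 as ℓ → ∞; and (ii) if (c_j)_{j ≥ 0} are positive reals with Σ_{j=0}^∞ c_j^{−2} < ∞, then sup_{N ≥ 2} N^{−2ℓ} Σ_{x,y ∈ B_ℓ^{(N)}} Σ_{j=|x−y|}^∞ c_j^{−2} → 0 as ℓ → ∞. -/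
/-!
Since `|x - y| ≤ k` forces `x - y` into the ball of radius `k`, each `x` in `B_ℓ` has at most
`N^k` partners `y ∈ B_ℓ` at distance `k`. Hence the mean of `F(|x - y|)` over pairs in `B_ℓ` is
at most `∑_{k ≤ ℓ} N^{-(ℓ-k)} F(k) ≤ ∑_{k ≤ ℓ} 2^{-(ℓ-k)} F(k)`, uniformly in `N ≥ 2`. This is
the convolution of `F` with a summable kernel, so it tends to `0` whenever `F` is bounded and
tends to `0` (dominated convergence). In (i) `F(k) = N^{-k/2} ≤ 2^{-k/2}`, in (ii) `F(k)` is the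
tail `∑_{j ≥ k} c_j^{-2}` of a convergent series.
-/

open MeasureTheory ENNReal NNReal Filter

open Finset Topology

theorem ENNReal.tendsto_tsum_of_dominated_convergence {β : Type*} [Countable β]
    {f : ℕ → β → ℝ≥0∞} {g bound : β → ℝ≥0∞} (h_bound : ∀ n b, f n b ≤ bound b)
    (h_fin : ∑' b, bound b ≠ ∞) (h_lim : ∀ b, Tendsto (f · b) atTop (𝓝 (g b))) :
    Tendsto (fun n => ∑' b, f n b) atTop (𝓝 (∑' b, g b)) := by
  let _ : MeasurableSpace β := ⊤
  simpa only [lintegral_count] using tendsto_lintegral_of_dominated_convergence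
    (μ := Measure.count) bound (fun _ => measurable_of_countable _)
    (fun n => Eventually.of_forall (h_bound n)) (by rwa [lintegral_count])
    (Eventually.of_forall h_lim)

theorem tendsto_sum_range_mul_sub_of_tendsto_zero {a G : ℕ → ℝ≥0∞} {C : ℝ≥0∞}
    (ha : ∑' m, a m ≠ ∞) (hGC : ∀ k, G k ≤ C) (hC : C ≠ ∞) (hG : Tendsto G atTop (𝓝 0)) :
    Tendsto (fun l => ∑ k ∈ range (l + 1), a (l - k) * G k) atTop (𝓝 0) := by
  -- Indexing by `m = l - k`, each term tends to `0` as `l → ∞` and is dominated by `a m * C`.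
  have reflect (l : ℕ) : ∑ k ∈ range (l + 1), a (l - k) * G k
      = ∑' m, if m ≤ l then a m * G (l - m) else 0 := by
    rw [← sum_range_reflect, tsum_eq_sum (s := range (l + 1))]
    · refine sum_congr rfl fun m hm => ?_
      rw [mem_range] at hm
      rw [if_pos (by omega)]
      congr 2
      omega
    · intro m hm
      rw [mem_range] at hm
      rw [if_neg (by omega)]
  simp_rw [reflect]
  have hlim (m : ℕ) : Tendsto (fun l => a m * G (l - m)) atTop (𝓝 0) := by
    simpa using ENNReal.Tendsto.const_mul (hG.comp (tendsto_sub_atTop_nat m))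
      (Or.inr (ENNReal.ne_top_of_tsum_ne_top ha m))
  simpa using ENNReal.tendsto_tsum_of_dominated_convergence (g := fun _ => 0)
    (bound := fun m => a m * C)
    (fun l m => by split_ifs <;> simp [mul_le_mul_right (hGC _)])
    (by rw [ENNReal.tsum_mul_right]; exact mul_ne_top ha hC)
    fun m => (hlim m).congr' ((eventually_ge_atTop m).mono fun l hl => (if_pos hl).symm)

abbrev HBall (N l : ℕ) : Type := {x : HGroup N // hdist x 0 ≤ l}

noncomputable def ballPairMean (N l : ℕ) (F : ℕ → ℝ≥0∞) : ℝ≥0∞ :=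
  ((N : ℝ≥0∞) ^ (2 * l))⁻¹ * ∑' x : HBall N l, ∑' y : HBall N l, F (hdist x.1 y.1)

variable {N : ℕ}

theorem hdist_eq_hdist_sub_zero (x y : HGroup N) : hdist x y = hdist (x - y) 0 := by
  rw [hdist, hdist, sub_zero]

theorem hdist_le_max (x y : HGroup N) : hdist x y ≤ max (hdist x 0) (hdist y 0) := by
  simp only [hdist, sub_zero, ← Finset.sup_union]
  exact Finset.sup_mono Finsupp.support_sub

theorem hdist_zero_le_iff (x : HGroup N) (l : ℕ) : hdist x 0 ≤ l ↔ ↑x.support ⊆ Set.Iio l := by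
  simp [hdist, Finset.sup_le_iff, Set.subset_def]

noncomputable def hBallEquivFun (N l : ℕ) : HBall N l ≃ (Set.Iio l → ZMod N) :=
  (Equiv.subtypeEquivRight fun x => hdist_zero_le_iff x l).trans
    ((Finsupp.restrictSupportEquiv _ _).trans Finsupp.equivFunOnFinite)

noncomputable instance [NeZero N] (l : ℕ) : Fintype (HBall N l) :=
  Fintype.ofEquiv _ (hBallEquivFun N l).symm

theorem card_hBall [NeZero N] (l : ℕ) : Fintype.card (HBall N l) = N ^ l := by
  simp [Fintype.card_congr (hBallEquivFun N l), ZMod.card]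

theorem card_filter_hdist_le [NeZero N] (x : HGroup N) (l k : ℕ) :
    #{y : HBall N l | hdist x y.1 ≤ k} ≤ N ^ k := by
  rw [← Fintype.card_subtype, ← card_hBall k]
  refine Fintype.card_le_of_injective
    (fun y => ⟨x - y.1.1, hdist_eq_hdist_sub_zero x y.1.1 ▸ y.2⟩) fun y y' h => ?_
  exact Subtype.ext (Subtype.ext (sub_right_injective (congrArg Subtype.val h)))

theorem sum_hdist_le [NeZero N] (F : ℕ → ℝ≥0∞) (l : ℕ) (x : HBall N l) :
    ∑ y : HBall N l, F (hdist x.1 y.1) ≤ ∑ k ∈ range (l + 1), (N : ℝ≥0∞) ^ k * F k := by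
  classical
  have hmaps : univ.image (fun y : HBall N l => hdist x.1 y.1) ⊆ range (l + 1) := by
    simp only [image_subset_iff, mem_range, Nat.lt_succ_iff]
    exact fun y _ => (hdist_le_max _ _).trans (max_le x.2 y.2)
  calc ∑ y : HBall N l, F (hdist x.1 y.1)
      = ∑ k ∈ univ.image (fun y : HBall N l => hdist x.1 y.1),
          #{y : HBall N l | hdist x.1 y.1 = k} • F k := sum_comp _ _
    _ ≤ ∑ k ∈ univ.image (fun y : HBall N l => hdist x.1 y.1), (N : ℝ≥0∞) ^ k * F k := by
      refine sum_le_sum fun k _ => ?_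
      rw [nsmul_eq_mul]
      gcongr
      exact_mod_cast (card_le_card (monotone_filter_right _ fun _ _ => le_of_eq)).trans
        (card_filter_hdist_le x.1 l k)
    _ ≤ ∑ k ∈ range (l + 1), (N : ℝ≥0∞) ^ k * F k := sum_le_sum_of_subset hmaps

theorem ENNReal.inv_pow_two_mul_mul_pow_mul_pow {a : ℝ≥0∞} (h0 : a ≠ 0) (ht : a ≠ ∞) {k l : ℕ}
    (hk : k ≤ l) : (a ^ (2 * l))⁻¹ * (a ^ l * a ^ k) = a⁻¹ ^ (l - k) := by
  rw [← pow_add, show 2 * l = (l - k) + (l + k) by omega, pow_add,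
    ENNReal.mul_inv (Or.inr (pow_ne_top ht)) (Or.inr (pow_ne_zero _ h0)), mul_assoc,
    ENNReal.inv_mul_cancel (pow_ne_zero _ h0) (pow_ne_top ht), mul_one, ENNReal.inv_pow]

theorem ballPairMean_le (hN : 2 ≤ N) (l : ℕ) (F : ℕ → ℝ≥0∞) :
    ballPairMean N l F ≤ ∑ k ∈ range (l + 1), 2⁻¹ ^ (l - k) * F k := by
  have : NeZero N := ⟨by omega⟩
  have hN0 : (N : ℝ≥0∞) ≠ 0 := by simp [NeZero.ne N]
  calc ballPairMean N l F
      ≤ ((N : ℝ≥0∞) ^ (2 * l))⁻¹ *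
          ∑ _x : HBall N l, ∑ k ∈ range (l + 1), (N : ℝ≥0∞) ^ k * F k := by
        simp only [ballPairMean, tsum_fintype]
        gcongr with x
        exact sum_hdist_le F l x
    _ = ∑ k ∈ range (l + 1), (N : ℝ≥0∞)⁻¹ ^ (l - k) * F k := by
        rw [sum_const, card_univ, card_hBall, nsmul_eq_mul, mul_sum, mul_sum]
        refine sum_congr rfl fun k hk => ?_
        rw [← ENNReal.inv_pow_two_mul_mul_pow_mul_pow hN0 (natCast_ne_top N)
          (Nat.lt_succ_iff.1 (mem_range.1 hk))]
        push_cast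
        ring
    _ ≤ ∑ k ∈ range (l + 1), 2⁻¹ ^ (l - k) * F k := by
        gcongr
        exact_mod_cast hN

theorem tendsto_iSup_ballPairMean_zero {F : ℕ → ℕ → ℝ≥0∞} {G : ℕ → ℝ≥0∞} {C : ℝ≥0∞}
    (hFG : ∀ N, 2 ≤ N → ∀ k, F N k ≤ G k) (hGC : ∀ k, G k ≤ C) (hC : C ≠ ∞)
    (hG : Tendsto G atTop (𝓝 0)) :
    Tendsto (fun l => ⨆ (N : ℕ) (_ : 2 ≤ N), ballPairMean N l (F N)) atTop (𝓝 0) := by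
  have hgeom : ∑' m : ℕ, (2⁻¹ : ℝ≥0∞) ^ m ≠ ∞ := by
    rw [ENNReal.tsum_geometric, ENNReal.one_sub_inv_two, inv_inv]
    exact ofNat_ne_top
  refine tendsto_of_tendsto_of_tendsto_of_le_of_le tendsto_const_nhds
    (tendsto_sum_range_mul_sub_of_tendsto_zero hgeom hGC hC hG) (fun _ => zero_le)
    fun l => iSup₂_le fun N hN => (ballPairMean_le hN l (F N)).trans ?_
  gcongr with k
  exact hFG N hN k

theorem tendsto_iSup_ballPairMean_rpow_neg_half :
    Tendsto (fun l => ⨆ (N : ℕ) (_ : 2 ≤ N),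
      ballPairMean N l fun k => ENNReal.ofReal ((N : ℝ) ^ (-((k : ℝ) / 2)))) atTop (𝓝 0) := by
  refine tendsto_iSup_ballPairMean_zero (G := fun k => ENNReal.ofReal (2 ^ (-((k : ℝ) / 2))))
    (fun N hN k => ?_) (fun k => ofReal_le_one.2 (Real.rpow_le_one_of_one_le_of_nonpos one_le_two
      (neg_nonpos.2 (by positivity)))) one_ne_top ?_
  · have hN' : (2 : ℝ) ≤ N := by exact_mod_cast hN
    exact ofReal_le_ofReal (Real.rpow_le_rpow_of_nonpos two_pos hN' (neg_nonpos.2 (by positivity)))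
  · rw [← ofReal_zero]
    exact ENNReal.tendsto_ofReal ((tendsto_rpow_atBot_of_base_gt_one 2 one_lt_two).comp
      (tendsto_neg_atTop_atBot.comp
        ((tendsto_natCast_atTop_atTop (R := ℝ)).atTop_div_const two_pos)))

theorem tendsto_iSup_ballPairMean_tsum_tail {g : ℕ → ℝ≥0∞} (hg : ∑' j, g j ≠ ∞) :
    Tendsto (fun l => ⨆ (N : ℕ) (_ : 2 ≤ N),
      ballPairMean N l fun k => ∑' j, if k ≤ j then g j else 0) atTop (𝓝 0) := by
  have tail_le (k j : ℕ) : (if k ≤ j then g j else 0) ≤ g j := by split_ifs <;> simp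
  refine tendsto_iSup_ballPairMean_zero (fun _ _ _ => le_rfl)
    (fun k => ENNReal.tsum_le_tsum (tail_le k)) hg ?_
  simpa using ENNReal.tendsto_tsum_of_dominated_convergence (g := fun _ => 0) tail_le hg
    fun j => tendsto_const_nhds.congr'
      ((eventually_gt_atTop j).mono fun k hk => (if_neg (by omega)).symm)

/-- Uniform-in-`N` estimates over the balls `B_ℓ^{(N)} = {x : |x| ≤ ℓ}` of the hierarchical
group: (i) `sup_{N ≥ 2} N^{−2ℓ} ∑_{x,y ∈ B_ℓ} N^{−|x−y|/2} → 0` as `ℓ → ∞`, and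
(ii) if `∑_j c_j^{−2} < ∞` then `sup_{N ≥ 2} N^{−2ℓ} ∑_{x,y ∈ B_ℓ} ∑_{j ≥ |x−y|} c_j^{−2} → 0`
as `ℓ → ∞`. -/
theorem ball_sums_vanish_uniformly :
    (Tendsto
      (fun l : ℕ => ⨆ (N : ℕ) (_ : 2 ≤ N),
        (((N : ℝ≥0∞) ^ (2 * l))⁻¹ *
          ∑' x : {x : HGroup N // hdist x 0 ≤ l},
            ∑' y : {y : HGroup N // hdist y 0 ≤ l},
              ENNReal.ofReal ((N : ℝ) ^ (-((hdist x.1 y.1 : ℝ) / 2)))))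
      atTop (nhds 0)) ∧
    (∀ c : ℕ → ℝ, (∀ j, 0 < c j) → Summable (fun j => ((c j) ^ 2)⁻¹) →
      Tendsto
        (fun l : ℕ => ⨆ (N : ℕ) (_ : 2 ≤ N),
          (((N : ℝ≥0∞) ^ (2 * l))⁻¹ *
            ∑' x : {x : HGroup N // hdist x 0 ≤ l},
              ∑' y : {y : HGroup N // hdist y 0 ≤ l},
                ∑' j : ℕ,
                  if hdist x.1 y.1 ≤ j then ENNReal.ofReal (((c j) ^ 2)⁻¹) else 0))
        atTop (nhds 0)) := by
  refine ⟨tendsto_iSup_ballPairMean_rpow_neg_half, fun c _ hc =>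
    tendsto_iSup_ballPairMean_tsum_tail ?_⟩
  rw [← ENNReal.ofReal_tsum_of_nonneg (fun j => by positivity) hc]
  exact ofReal_ne_top
end

section
/- Fix c > 0 and t > 0, and for each ε > 0 let X^ε be a random variable with values in [0,∞) such that E[e^{−λX^ε}] = exp(−ε v(t,λ)) for all λ ≥ 0, where v(t,λ) = 2λc e^{−ct}/(λ(1 − e^{−ct}) + 2c). Then as ε → 0: (i) ε^{−1} P(X^ε > 0) → 2c e^{−ct}/(1 − e^{−ct}); and (ii) for every λ ≥ 0, the conditional expectation E[e^{−λX^ε} | X^ε > 0] converges to 2c/(λ(1 − e^{−ct}) + 2c), which is the Laplace transform of the exponential distribution with parameter 2c/(1 − e^{−ct}); hence the conditional law of X^ε given X^ε > 0 converges to Exp(2c/(1 − e^{−ct})). -/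
open MeasureTheory Real Filter ProbabilityTheory
open Set Topology

/-!
For `X ≥ 0`, `E[e^{-λX}] → P(X = 0)` as `λ → ∞`. Hence if `E[e^{-λX^ε}] = e^{-ε v(λ)}` with
`v(λ) → a`, then `P(X^ε = 0) = e^{-εa}`, so `P(X^ε > 0) = 1 - e^{-εa} ~ εa` and
`E[e^{-λX^ε}; X^ε > 0] = e^{-εv(λ)} - e^{-εa} ~ ε(a - v(λ))` as `ε → 0`; the conditional
Laplace transform therefore tends to `1 - v(λ)/a`. For the Feller diffusion
`a = 2c e^{-ct}/(1 - e^{-ct})` and `1 - v(λ)/a = u/(u + λ)` with `u = 2c/(1 - e^{-ct})`,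
the Laplace transform of `Exp(u)`.
-/

section
variable {Ω : Type*} [MeasurableSpace Ω] {P : Measure Ω} [IsFiniteMeasure P] {X : Ω → ℝ}

lemma integrable_exp_neg_mul_of_nonneg (hX : Measurable X) (hXnn : ∀ ω, 0 ≤ X ω) {lam : ℝ}
    (hlam : 0 ≤ lam) : Integrable (fun ω => exp (-lam * X ω)) P := by
  refine (integrable_const (1 : ℝ)).mono' (by fun_prop) (ae_of_all _ fun ω => ?_)
  rw [norm_of_nonneg (exp_nonneg _), exp_le_one_iff]
  nlinarith [hXnn ω]

lemma tendsto_integral_exp_neg_mul_atTop (hX : Measurable X) (hXnn : ∀ ω, 0 ≤ X ω) :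
    Tendsto (fun lam : ℝ => ∫ ω, exp (-lam * X ω) ∂P) atTop (𝓝 (P.real {ω | X ω = 0})) := by
  have hzero : MeasurableSet {ω | X ω = 0} := hX (measurableSet_singleton 0)
  rw [← integral_indicator_one hzero]
  refine tendsto_integral_filter_of_dominated_convergence (fun _ => 1)
    (Eventually.of_forall fun _ => by fun_prop) ?_ (integrable_const 1) (ae_of_all _ fun ω => ?_)
  · filter_upwards [eventually_ge_atTop 0] with lam hlam
    refine ae_of_all _ fun ω => ?_
    rw [norm_of_nonneg (exp_nonneg _), exp_le_one_iff]
    nlinarith [hXnn ω]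
  · rcases (hXnn ω).eq_or_lt with h0 | hpos
    · simp [← h0]
    · have hω : ω ∉ {ω | X ω = 0} := hpos.ne'
      rw [indicator_of_notMem hω]
      simpa [Function.comp_def] using
        tendsto_exp_neg_atTop_nhds_zero.comp (tendsto_id.atTop_mul_const hpos)

lemma setIntegral_pos_exp_neg_mul_eq_sub (hX : Measurable X) (hXnn : ∀ ω, 0 ≤ X ω) {lam : ℝ}
    (hlam : 0 ≤ lam) :
    ∫ ω in {ω | 0 < X ω}, exp (-lam * X ω) ∂P =
      ∫ ω, exp (-lam * X ω) ∂P - P.real {ω | X ω = 0} := by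
  have hzero : MeasurableSet {ω | X ω = 0} := hX (measurableSet_singleton 0)
  have hcompl : {ω | X ω = 0}ᶜ = {ω | 0 < X ω} := by
    ext ω
    simp [(hXnn ω).lt_iff_ne']
  have hon_zero : ∫ ω in {ω | X ω = 0}, exp (-lam * X ω) ∂P = P.real {ω | X ω = 0} := by
    rw [setIntegral_congr_fun hzero (g := fun _ => 1) fun ω (hω : X ω = 0) => by simp [hω]]
    simp
  rw [← integral_add_compl (μ := P) hzero (integrable_exp_neg_mul_of_nonneg hX hXnn hlam),
    hon_zero, hcompl]
  ring

lemma measureReal_eq_zero_eq_exp_of_laplace (hX : Measurable X) (hXnn : ∀ ω, 0 ≤ X ω) {ε : ℝ}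
    {v : ℝ → ℝ} {a : ℝ}
    (hLap : ∀ lam, 0 ≤ lam → ∫ ω, exp (-lam * X ω) ∂P = exp (-(ε * v lam)))
    (hv : Tendsto v atTop (𝓝 a)) :
    P.real {ω | X ω = 0} = exp (-(ε * a)) := by
  refine tendsto_nhds_unique (tendsto_integral_exp_neg_mul_atTop hX hXnn) ?_
  refine ((continuous_exp.tendsto _).comp (hv.const_mul ε).neg).congr' ?_
  filter_upwards [eventually_ge_atTop 0] with lam hlam
  exact (hLap lam hlam).symm

end

lemma tendsto_inv_mul_one_sub_exp_neg_mul (a : ℝ) :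
    Tendsto (fun ε : ℝ => ε⁻¹ * (1 - exp (-(ε * a)))) (𝓝[≠] 0) (𝓝 a) := by
  have hderiv : HasDerivAt (fun ε : ℝ => 1 - exp (-(ε * a))) a 0 := by
    simpa using ((hasDerivAt_mul_const (x := 0) a).neg.exp).const_sub 1
  refine (hasDerivAt_iff_tendsto_slope.mp hderiv).congr fun ε => ?_
  simp [slope_def_field, div_eq_inv_mul]

lemma integral_exp_neg_mul_expMeasure {u lam : ℝ} (hu : 0 < u) (hulam : 0 < u + lam) :
    ∫ x, exp (-lam * x) ∂(expMeasure u) = u / (u + lam) := by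
  have hdensity : ∀ x, (gammaPDF 1 u x).toReal • exp (-lam * x) =
      (Ici 0).indicator (fun x => u * exp (-(u + lam) * x)) x := by
    intro x
    rw [gammaPDF, ENNReal.toReal_ofReal (gammaPDFReal_nonneg one_pos hu x), smul_eq_mul,
      gammaPDFReal]
    split_ifs with hx
    · rw [indicator_of_mem (mem_Ici.mpr hx)]
      simp only [Gamma_one, sub_self, rpow_zero, rpow_one, div_one, mul_one, mul_assoc,
        ← exp_add]
      ring_nf
    · rw [indicator_of_notMem (by simpa using hx), zero_mul]
  rw [expMeasure, gammaMeasure, integral_withDensity_eq_integral_toReal_smul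
    (show Measurable (gammaPDF 1 u) from (measurable_gammaPDFReal 1 u).ennreal_ofReal)
    (ae_of_all _ fun _ => ENNReal.ofReal_lt_top)]
  simp_rw [hdensity]
  rw [integral_indicator measurableSet_Ici, integral_Ici_eq_integral_Ioi, integral_const_mul,
    integral_exp_mul_Ioi (by linarith) 0]
  field_simp
  simp

lemma tendsto_mul_div_mul_add_atTop (b d : ℝ) {s : ℝ} (hs : s ≠ 0) :
    Tendsto (fun x : ℝ => b * x / (x * s + d)) atTop (𝓝 (b / s)) := by
  have hlim : Tendsto (fun x : ℝ => b / (s + d / x)) atTop (𝓝 (b / (s + 0))) :=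
    tendsto_const_nhds.div (tendsto_const_nhds.add (tendsto_const_nhds.div_atTop tendsto_id))
      (by simpa using hs)
  rw [add_zero] at hlim
  refine hlim.congr' ?_
  filter_upwards [eventually_gt_atTop 0] with x hx
  field_simp

section
variable {Ω : Type*} [MeasurableSpace Ω] {P : Measure Ω} [IsProbabilityMeasure P]

lemma measureReal_pos_eq_one_sub_exp_of_laplace {X : Ω → ℝ} (hX : Measurable X)
    (hXnn : ∀ ω, 0 ≤ X ω) {ε : ℝ} {v : ℝ → ℝ} {a : ℝ}
    (hLap : ∀ lam, 0 ≤ lam → ∫ ω, exp (-lam * X ω) ∂P = exp (-(ε * v lam)))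
    (hv : Tendsto v atTop (𝓝 a)) :
    P.real {ω | 0 < X ω} = 1 - exp (-(ε * a)) := by
  simpa [measureReal_eq_zero_eq_exp_of_laplace hX hXnn hLap hv] using
    setIntegral_pos_exp_neg_mul_eq_sub (P := P) hX hXnn le_rfl

lemma setIntegral_pos_eq_sub_exp_of_laplace {X : Ω → ℝ} (hX : Measurable X)
    (hXnn : ∀ ω, 0 ≤ X ω) {ε : ℝ} {v : ℝ → ℝ} {a : ℝ}
    (hLap : ∀ lam, 0 ≤ lam → ∫ ω, exp (-lam * X ω) ∂P = exp (-(ε * v lam)))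
    (hv : Tendsto v atTop (𝓝 a)) {lam : ℝ} (hlam : 0 ≤ lam) :
    ∫ ω in {ω | 0 < X ω}, exp (-lam * X ω) ∂P = exp (-(ε * v lam)) - exp (-(ε * a)) := by
  rw [setIntegral_pos_exp_neg_mul_eq_sub hX hXnn hlam, hLap lam hlam,
    measureReal_eq_zero_eq_exp_of_laplace hX hXnn hLap hv]

variable {X : ℝ → Ω → ℝ} {v : ℝ → ℝ} {a : ℝ}

theorem tendsto_inv_mul_measureReal_pos (hX : ∀ ε, 0 < ε → Measurable (X ε))
    (hXnn : ∀ ε, 0 < ε → ∀ ω, 0 ≤ X ε ω)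
    (hLap : ∀ ε, 0 < ε → ∀ lam, 0 ≤ lam →
      ∫ ω, exp (-lam * X ε ω) ∂P = exp (-(ε * v lam)))
    (hv : Tendsto v atTop (𝓝 a)) :
    Tendsto (fun ε => ε⁻¹ * P.real {ω | 0 < X ε ω}) (𝓝[>] 0) (𝓝 a) := by
  refine ((tendsto_inv_mul_one_sub_exp_neg_mul a).mono_left (nhdsGT_le_nhdsNE 0)).congr' ?_
  filter_upwards [self_mem_nhdsWithin] with ε (hε : 0 < ε)
  rw [measureReal_pos_eq_one_sub_exp_of_laplace (hX ε hε) (hXnn ε hε) (hLap ε hε) hv]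

theorem tendsto_setIntegral_div_measureReal_pos (hX : ∀ ε, 0 < ε → Measurable (X ε))
    (hXnn : ∀ ε, 0 < ε → ∀ ω, 0 ≤ X ε ω)
    (hLap : ∀ ε, 0 < ε → ∀ lam, 0 ≤ lam →
      ∫ ω, exp (-lam * X ε ω) ∂P = exp (-(ε * v lam)))
    (hv : Tendsto v atTop (𝓝 a)) (ha : a ≠ 0) {lam : ℝ} (hlam : 0 ≤ lam) :
    Tendsto (fun ε => (∫ ω in {ω | 0 < X ε ω}, exp (-lam * X ε ω) ∂P) / P.real {ω | 0 < X ε ω})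
      (𝓝[>] 0) (𝓝 ((a - v lam) / a)) := by
  have hslope : ∀ b, Tendsto (fun ε : ℝ => ε⁻¹ * (1 - exp (-(ε * b)))) (𝓝[>] 0) (𝓝 b) :=
    fun b => (tendsto_inv_mul_one_sub_exp_neg_mul b).mono_left (nhdsGT_le_nhdsNE 0)
  refine (((hslope a).sub (hslope (v lam))).div (hslope a) ha).congr' ?_
  filter_upwards [self_mem_nhdsWithin] with ε (hε : 0 < ε)
  rw [measureReal_pos_eq_one_sub_exp_of_laplace (hX ε hε) (hXnn ε hε) (hLap ε hε) hv,
    setIntegral_pos_eq_sub_exp_of_laplace (hX ε hε) (hXnn ε hε) (hLap ε hε) hv hlam]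
  change (ε⁻¹ * _ - ε⁻¹ * _) / (ε⁻¹ * _) = _
  rw [← mul_sub, mul_div_mul_left _ _ (inv_ne_zero hε.ne')]
  ring

end

/-- Asymptotics as `ε → 0` for a family `X^ε ≥ 0` with Laplace transforms
`E[e^{−λX^ε}] = exp(−ε v(t,λ))`, `v(t,λ) = 2λc e^{−ct}/(λ(1 − e^{−ct}) + 2c)`:
(i) `ε⁻¹ P(X^ε > 0) → 2c e^{−ct}/(1 − e^{−ct})`;
(ii) for every `λ ≥ 0`, `E[e^{−λX^ε} | X^ε > 0] → 2c/(λ(1 − e^{−ct}) + 2c)`, which is the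
Laplace transform of the exponential distribution with parameter `2c/(1 − e^{−ct})`; hence the
conditional law of `X^ε` given `X^ε > 0` converges to `Exp(2c/(1 − e^{−ct}))`. -/
theorem conditional_law_convergence {Ω : Type*} [MeasurableSpace Ω]
    (P : Measure Ω) [IsProbabilityMeasure P]
    (c t : ℝ) (hc : 0 < c) (ht : 0 < t)
    (X : ℝ → Ω → ℝ)
    (hX : ∀ ε : ℝ, 0 < ε → Measurable (X ε))
    (hXnn : ∀ ε : ℝ, 0 < ε → ∀ ω, 0 ≤ X ε ω)
    (hLap : ∀ ε : ℝ, 0 < ε → ∀ lam : ℝ, 0 ≤ lam →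
      ∫ ω, Real.exp (-lam * X ε ω) ∂P =
        Real.exp (-(ε * (2 * lam * c * Real.exp (-c * t) /
          (lam * (1 - Real.exp (-c * t)) + 2 * c))))) :
    Tendsto (fun ε : ℝ => ε⁻¹ * (P {ω | 0 < X ε ω}).toReal)
        (nhdsWithin 0 (Set.Ioi (0 : ℝ)))
        (nhds (2 * c * Real.exp (-c * t) / (1 - Real.exp (-c * t)))) ∧
    (∀ lam : ℝ, 0 ≤ lam →
      Tendsto
        (fun ε : ℝ =>
          (∫ ω in {ω | 0 < X ε ω}, Real.exp (-lam * X ε ω) ∂P) /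
            (P {ω | 0 < X ε ω}).toReal)
        (nhdsWithin 0 (Set.Ioi (0 : ℝ)))
        (nhds (2 * c / (lam * (1 - Real.exp (-c * t)) + 2 * c)))) ∧
    (∀ lam : ℝ, 0 ≤ lam →
      ∫ x, Real.exp (-lam * x) ∂(expMeasure (2 * c / (1 - Real.exp (-c * t)))) =
        2 * c / (lam * (1 - Real.exp (-c * t)) + 2 * c)) := by
  have hE : 0 < exp (-c * t) := exp_pos _
  have hs : 0 < 1 - exp (-c * t) := by
    rw [sub_pos, exp_lt_one_iff]
    nlinarith
  set E := exp (-c * t)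
  have hv : Tendsto (fun lam => 2 * lam * c * E / (lam * (1 - E) + 2 * c)) atTop
      (𝓝 (2 * c * E / (1 - E))) :=
    (tendsto_mul_div_mul_add_atTop (2 * c * E) (2 * c) hs.ne').congr fun lam => by ring
  refine ⟨tendsto_inv_mul_measureReal_pos hX hXnn hLap hv, fun lam hlam => ?_,
    fun lam hlam => ?_⟩
  all_goals have hd : 0 < lam * (1 - E) + 2 * c := by positivity
  · convert tendsto_setIntegral_div_measureReal_pos hX hXnn hLap hv (by positivity) hlam
      using 2
    · rfl
    field_simp
    ring
  · rw [integral_exp_neg_mul_expMeasure (by positivity) (by positivity)]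
    field_simp
    ring
end
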